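/- Let T be a Lie-Yamaguti algebra over a field k of characteristic zero and let (F_n, G_n)_{n≥0} be a formal one-parameter deformation of T. Then the infinitesimal (F₁, G₁) is a (2,3)-cocycle with respect to the regular representation: δ_I(F₁,G₁) = 0, δ_II(F₁,G₁) = 0, δ*_I(F₁,G₁) = 0 and δ*_II(F₁,G₁) = 0. -/

import Mathlib

structure LieYamaguti (k T : Type*) [Field k] [CharZero k] [AddCommGroup T] [Module k T] where
  mul : T →ₗ[k] T →ₗ[k] T
  tri : T →ₗ[k] T →ₗ[k] T →ₗ[k] T
  ly1 : ∀ a : T, mul a a = 0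
  ly2 : ∀ a b : T, tri a a b = 0
  ly3 : ∀ a b c : T, tri a b c + tri b c a + tri c a b
      + mul (mul a b) c + mul (mul b c) a + mul (mul c a) b = 0
  ly4 : ∀ a b c d : T, tri (mul a b) c d + tri (mul b c) a d + tri (mul c a) b d = 0
  ly5 : ∀ a b c d : T, tri a b (mul c d) = mul (tri a b c) d + mul c (tri a b d)
  ly6 : ∀ a b c d e : T, tri a b (tri c d e)
      = tri (tri a b c) d e + tri c (tri a b d) e + tri c d (tri a b e)

/-- `f : T × T → V` is bilinear. -/
def IsBilin (k : Type*) {T V : Type*} [Field k] [AddCommGroup T] [Module k T]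
    [AddCommGroup V] [Module k V] (f : T → T → V) : Prop :=
  (∀ b, IsLinearMap k (fun a => f a b)) ∧ (∀ a, IsLinearMap k (fun b => f a b))

/-- `g : T × T × T → V` is trilinear. -/
def IsTrilin (k : Type*) {T V : Type*} [Field k] [AddCommGroup T] [Module k T]
    [AddCommGroup V] [Module k V] (g : T → T → T → V) : Prop :=
  (∀ b c, IsLinearMap k (fun a => g a b c)) ∧ (∀ a c, IsLinearMap k (fun b => g a b c)) ∧
  (∀ a b, IsLinearMap k (fun c => g a b c))

/-- A formal one-parameter deformation of the Lie-Yamaguti algebra `L`. -/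
structure LYDeform (k T : Type*) [Field k] [CharZero k] [AddCommGroup T] [Module k T]
    (L : LieYamaguti k T) where
  F : ℕ → T → T → T
  G : ℕ → T → T → T → T
  Fbil : ∀ n, IsBilin k (F n)
  Gtril : ∀ n, IsTrilin k (G n)
  F0 : ∀ a b : T, F 0 a b = L.mul a b
  G0 : ∀ a b c : T, G 0 a b c = L.tri a b c
  Falt : ∀ n, ∀ a : T, F n a a = 0
  Galt : ∀ n, ∀ a b : T, G n a a b = 0
  d1 : ∀ n, ∀ a b c : T,
    (∑ p ∈ Finset.HasAntidiagonal.antidiagonal n,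
      (F p.1 (F p.2 a b) c + F p.1 (F p.2 b c) a + F p.1 (F p.2 c a) b))
      + G n a b c + G n b c a + G n c a b = 0
  d2 : ∀ n, ∀ a b c d : T,
    ∑ p ∈ Finset.HasAntidiagonal.antidiagonal n,
      (G p.1 (F p.2 a b) c d + G p.1 (F p.2 b c) a d + G p.1 (F p.2 c a) b d) = 0
  d3 : ∀ n, ∀ a b c d : T,
    ∑ p ∈ Finset.HasAntidiagonal.antidiagonal n,
      (G p.1 a b (F p.2 c d) - F p.1 (G p.2 a b c) d - F p.1 c (G p.2 a b d)) = 0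
  d4 : ∀ n, ∀ a b c d e : T,
    ∑ p ∈ Finset.HasAntidiagonal.antidiagonal n,
      (G p.1 a b (G p.2 c d e) - G p.1 (G p.2 a b c) d e
        - G p.1 c (G p.2 a b d) e - G p.1 c d (G p.2 a b e)) = 0

variable {k T : Type*} [Field k] [CharZero k] [AddCommGroup T] [Module k T]

/-- `δ_I(f,g)`, with respect to the regular representation. -/
def rdI (L : LieYamaguti k T) (f : T → T → T) (g : T → T → T → T) (a b c d : T) : T :=
  - L.mul c (g a b d) + L.mul d (g a b c) + g a b (L.mul c d)
    + L.tri a b (f c d) - f (L.tri a b c) d - f c (L.tri a b d)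

/-- `δ_II(f,g)`, with respect to the regular representation. -/
def rdII (L : LieYamaguti k T) (_f : T → T → T) (g : T → T → T → T) (a b c d e : T) : T :=
  - L.tri (g a b c) d e + L.tri (g a b d) c e + L.tri a b (g c d e) - L.tri c d (g a b e)
    + g a b (L.tri c d e) - g (L.tri a b c) d e - g c (L.tri a b d) e - g c d (L.tri a b e)

/-- `δ*_I(f,g)`, with respect to the regular representation. -/
def rdsI (L : LieYamaguti k T) (f : T → T → T) (g : T → T → T → T) (a b c : T) : T :=
  - L.mul a (f b c) - L.mul b (f c a) - L.mul c (f a b)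
    + f (L.mul a b) c + f (L.mul b c) a + f (L.mul c a) b
    + g a b c + g b c a + g c a b

/-- `δ*_II(f,g)`, with respect to the regular representation. -/
def rdsII (L : LieYamaguti k T) (f : T → T → T) (g : T → T → T → T) (a b c d : T) : T :=
  L.tri (f b c) a d + L.tri (f c a) b d + L.tri (f a b) c d
    + g (L.mul a b) c d + g (L.mul b c) a d + g (L.mul c a) b d

/-
The order-`t` coefficient of each deformation equation involves only `(F₀, G₀) = (*, [ , , ])`
and `(F₁, G₁)`; after rewriting the terms where the structure maps act from the "wrong" side by
skew-symmetry, it is literally the corresponding cocycle condition.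
-/

theorem Finset.Nat.sum_antidiagonal_one {M : Type*} [AddCommMonoid M] (f : ℕ × ℕ → M) :
    ∑ p ∈ Finset.HasAntidiagonal.antidiagonal 1, f p = f (0, 1) + f (1, 0) := by
  simp [Finset.Nat.sum_antidiagonal_succ]

namespace LieYamaguti

variable (L : LieYamaguti k T)

theorem mul_swap (a b : T) : L.mul b a = -L.mul a b :=
  ((LinearMap.IsAlt.neg L.ly1) a b).symm

theorem tri_isAlt : L.tri.IsAlt := fun a => LinearMap.ext (L.ly2 a)

theorem tri_swap (a b c : T) : L.tri b a c = -L.tri a b c := by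
  rw [← L.tri_isAlt.neg a b, LinearMap.neg_apply]

end LieYamaguti

namespace LYDeform

variable {L : LieYamaguti k T} (Df : LYDeform k T L)

theorem rdI_one_eq_zero (a b c d : T) : rdI L (Df.F 1) (Df.G 1) a b c d = 0 := by
  have h := Df.d3 1 a b c d
  simp only [Finset.Nat.sum_antidiagonal_one, Df.F0, Df.G0] at h
  rw [rdI, L.mul_swap (Df.G 1 a b c) d]
  linear_combination (norm := abel) h

theorem rdII_one_eq_zero (a b c d e : T) : rdII L (Df.F 1) (Df.G 1) a b c d e = 0 := by
  have h := Df.d4 1 a b c d e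
  simp only [Finset.Nat.sum_antidiagonal_one, Df.G0] at h
  rw [rdII, L.tri_swap c (Df.G 1 a b d) e]
  linear_combination (norm := abel) h

theorem rdsI_one_eq_zero (a b c : T) : rdsI L (Df.F 1) (Df.G 1) a b c = 0 := by
  have h := Df.d1 1 a b c
  simp only [Finset.Nat.sum_antidiagonal_one, Df.F0] at h
  rw [rdsI, L.mul_swap (Df.F 1 b c) a, L.mul_swap (Df.F 1 c a) b, L.mul_swap (Df.F 1 a b) c]
  linear_combination (norm := abel) h

theorem rdsII_one_eq_zero (a b c d : T) : rdsII L (Df.F 1) (Df.G 1) a b c d = 0 := by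
  have h := Df.d2 1 a b c d
  simp only [Finset.Nat.sum_antidiagonal_one, Df.F0, Df.G0] at h
  rw [rdsII]
  linear_combination (norm := abel) h

end LYDeform

/-- The infinitesimal `(F₁, G₁)` of a formal deformation is a (2,3)-cocycle with respect to
the regular representation. -/
theorem infinitesimal_is_cocycle (L : LieYamaguti k T) (Df : LYDeform k T L) :
    (∀ a b c d : T, rdI L (Df.F 1) (Df.G 1) a b c d = 0) ∧
    (∀ a b c d e : T, rdII L (Df.F 1) (Df.G 1) a b c d e = 0) ∧
    (∀ a b c : T, rdsI L (Df.F 1) (Df.G 1) a b c = 0) ∧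
    (∀ a b c d : T, rdsII L (Df.F 1) (Df.G 1) a b c d = 0) :=
  ⟨Df.rdI_one_eq_zero, Df.rdII_one_eq_zero, Df.rdsI_one_eq_zero, Df.rdsII_one_eq_zero⟩
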